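/- arXiv:2407.07815 — 5 statements merged into one kernel-verified Lean document; each statement's English description precedes it below -/
import Mathlib

section
/- A map φ : {0,1}^n → {0,1}^m is a morphism in 𝒩 if and only if it extends to an affine morphism from ℤ^n to ℤ^m, i.e. if and only if there exist an additive group homomorphism m : ℤ^n → ℤ^m and b ∈ ℤ^m such that φ(v) = m(v) + b for every v ∈ {0,1}^n (regarding {0,1}^n as a subset of ℤ^n). -/
/-- `φ : {0,1}^n → {0,1}^m` is a morphism in the category `𝒩` if each coordinate
function `v ↦ φ(v)_i` is constant, or equal to `v ↦ v_j`, or to `v ↦ 1 - v_j`,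
for some `j`. -/
def IsNMorphism {n m : ℕ} (φ : (Fin n → Bool) → (Fin m → Bool)) : Prop :=
  ∀ i : Fin m, (∃ c : Bool, ∀ v, φ v i = c) ∨
    ∃ j : Fin n, (∀ v, φ v i = v j) ∨ (∀ v, φ v i = !(v j))

/-- The embedding `{0,1}^n ⊆ ℤ^n`. -/
def boolToInt {n : ℕ} (v : Fin n → Bool) : Fin n → ℤ :=
  fun j => if v j then 1 else 0

theorem isNMorphism_iff_extends_affine {n m : ℕ}
    (φ : (Fin n → Bool) → (Fin m → Bool)) :
    IsNMorphism φ ↔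
      ∃ (M : (Fin n → ℤ) →+ (Fin m → ℤ)) (b : Fin m → ℤ),
        ∀ v : Fin n → Bool, boolToInt (φ v) = M (boolToInt v) + b := by
  constructor
  · intro h
    have key : ∀ i : Fin m, ∃ (a : Fin n → ℤ) (c : ℤ),
        ∀ v, boolToInt (φ v) i = (∑ j, a j * boolToInt v j) + c := by
      intro i
      rcases h i with ⟨c, hc⟩ | ⟨j, hj | hj⟩
      · exact ⟨0, if c then 1 else 0, fun v => by simp [boolToInt, hc v]⟩
      · refine ⟨Pi.single j 1, 0, fun v => ?_⟩
        have hs : ∑ k, (Pi.single j 1 : Fin n → ℤ) k * boolToInt v k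
            = boolToInt v j := by
          rw [Finset.sum_eq_single j]
          · simp
          · intro k _ hk; simp [Pi.single_eq_of_ne hk]
          · intro hmem; exact absurd (Finset.mem_univ j) hmem
        rw [hs, add_zero]
        simp [boolToInt, hj v]
      · refine ⟨-Pi.single j 1, 1, fun v => ?_⟩
        have hs : ∑ k, (-Pi.single j 1 : Fin n → ℤ) k * boolToInt v k
            = -(boolToInt v j) := by
          rw [Finset.sum_eq_single j]
          · simp
          · intro k _ hk; simp [Pi.single_eq_of_ne hk]
          · intro hmem; exact absurd (Finset.mem_univ j) hmem
        rw [hs]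
        simp only [boolToInt, hj v]
        cases hv : v j <;> simp [hv]
    choose a c hac using key
    refine ⟨AddMonoidHom.mk' (fun x i => ∑ j, a i j * x j) ?_, c, ?_⟩
    · intro x y; funext i
      simp [mul_add, Finset.sum_add_distrib]
    · intro v; funext i
      simpa using hac i v
  · rintro ⟨M, b, hMb⟩
    intro i
    set a : Fin n → ℤ := fun j => M (Pi.single j 1) i with ha
    have hgval : ∀ v : Fin n → Bool, boolToInt (φ v) i = 0 ∨ boolToInt (φ v) i = 1 := by
      intro v; cases hv : φ v i <;> simp [boolToInt, hv]
    have hsum : ∀ v : Fin n → Bool,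
        boolToInt (φ v) i = (∑ j, boolToInt v j * a j) + b i := by
      intro v
      have h1 : boolToInt v = ∑ j, boolToInt v j • Pi.single j (1:ℤ) := by
        funext k
        rw [Finset.sum_apply, Finset.sum_eq_single k]
        · simp
        · intro l _ hl; simp [Pi.single_eq_of_ne (Ne.symm hl)]
        · intro hmem; exact absurd (Finset.mem_univ k) hmem
      have h2 : M (boolToInt v) i = ∑ j, boolToInt v j * a j := by
        conv_lhs => rw [h1]
        rw [map_sum, Finset.sum_apply]
        refine Finset.sum_congr rfl fun j _ => ?_
        rw [map_zsmul, Pi.smul_apply, smul_eq_mul]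
      rw [congrFun (hMb v) i, Pi.add_apply, h2]
    have hb : b i = 0 ∨ b i = 1 := by
      have hs := hsum (fun _ => false)
      have hss : (∑ k, boolToInt (fun _ : Fin n => false) k * a k) = 0 := by
        simp [boolToInt]
      rw [hss, zero_add] at hs
      rcases hgval (fun _ => false) with h | h <;> rw [h] at hs <;> omega
    have hone : ∀ j : Fin n, a j + b i = 0 ∨ a j + b i = 1 := by
      intro j
      have hs := hsum (fun k => decide (k = j))
      have hss : (∑ k, boolToInt (fun k => decide (k = j)) k * a k) = a j := by
        rw [Finset.sum_eq_single j]
        · simp [boolToInt]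
        · intro k _ hk; simp [boolToInt, hk]
        · intro hmem; exact absurd (Finset.mem_univ j) hmem
      rw [hss] at hs
      rcases hgval (fun k => decide (k = j)) with h | h <;> rw [h] at hs <;> omega
    have htwo : ∀ j k : Fin n, j ≠ k →
        a j + a k + b i = 0 ∨ a j + a k + b i = 1 := by
      intro j k hjk
      have hs := hsum (fun l => decide (l = j) || decide (l = k))
      have hpt : ∀ l, boolToInt (fun l => decide (l = j) || decide (l = k)) l * a l =
          (if l = j then a l else 0) + (if l = k then a l else 0) := by
        intro l
        by_cases h1 : l = j
        · subst h1; simp [boolToInt, hjk]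
        · by_cases h2 : l = k
          · subst h2; simp [boolToInt, h1]
          · simp [boolToInt, h1, h2]
      have hss : (∑ l, boolToInt (fun l => decide (l = j) || decide (l = k)) l * a l)
          = a j + a k := by
        rw [Finset.sum_congr rfl fun l _ => hpt l, Finset.sum_add_distrib]
        simp [Finset.sum_ite_eq']
      rw [hss] at hs
      rcases hgval (fun l => decide (l = j) || decide (l = k)) with h | h <;>
        rw [h] at hs <;> omega
    by_cases hA : ∀ j, a j = 0
    · left
      refine ⟨φ (fun _ => false) i, fun v => ?_⟩
      have h1 := hsum v
      have h2 := hsum (fun _ => false)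
      rw [Finset.sum_eq_zero (fun j _ => by rw [hA j, mul_zero]), zero_add] at h1 h2
      have heq : boolToInt (φ v) i = boolToInt (φ (fun _ => false)) i := by rw [h1, h2]
      cases hx : φ v i <;> cases hy : φ (fun _ => false) i <;>
        simp [boolToInt, hx, hy] at heq ⊢
    · right
      push_neg at hA
      obtain ⟨j, hj⟩ := hA
      refine ⟨j, ?_⟩
      have hzero : ∀ k, k ≠ j → a k = 0 := by
        intro k hk
        have h1 := hone j
        have h2 := hone k
        have h3 := htwo j k (Ne.symm hk)
        rcases hb with h | h <;> omega
      have hform : ∀ v : Fin n → Bool,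
          boolToInt (φ v) i = boolToInt v j * a j + b i := by
        intro v
        have hss : (∑ k, boolToInt v k * a k) = boolToInt v j * a j := by
          rw [Finset.sum_eq_single j]
          · intro k _ hk; rw [hzero k hk, mul_zero]
          · intro hmem; exact absurd (Finset.mem_univ j) hmem
        rw [hsum v, hss]
      have hcase : (a j = 1 ∧ b i = 0) ∨ (a j = -1 ∧ b i = 1) := by
        have h1 := hone j
        rcases hb with h | h <;> omega
      rcases hcase with ⟨h1, h2⟩ | ⟨h1, h2⟩
      · left
        intro v
        have hf := hform v
        rw [h1, h2, mul_one, add_zero] at hf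
        cases hx : φ v i <;> cases hy : v j <;> simp_all [boolToInt]
      · right
        intro v
        have hf := hform v
        rw [h1, h2] at hf
        cases hx : φ v i <;> cases hy : v j <;> simp_all [boolToInt]
end

section
/- A map φ : {0,1}^n → {0,1}^m is a morphism in 𝒢 if and only if the map f : F_n^□ → F_m^□ defined by f(τ_n(v)) = τ_m(φ(v)) for all v ∈ {0,1}^n extends to an affine morphism from F_n to F_m. -/
/-- A map `f : G₁ → G₂` between groups is an affine morphism if there exist an element
`a ∈ G₂` and a group homomorphism `m : G₁ → G₂` such that `f x = a * m x` for all `x`. -/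
def IsAffineMorphism {G₁ G₂ : Type*} [Group G₁] [Group G₂] (f : G₁ → G₂) : Prop :=
  ∃ (a : G₂) (m : G₁ →* G₂), ∀ x, f x = a * m x

/-- The fundamental cube `τ_k : {0,1}^k → F_k`, `τ_k v = g₁^{v₁} ⋯ g_k^{v_k}`
(left-to-right product). -/
def tauCube (k : ℕ) (v : Fin k → Bool) : FreeGroup (Fin k) :=
  (List.ofFn fun i => if v i then FreeGroup.of i else 1).prod

/-- `φ : {0,1}^n → {0,1}^m` is a morphism in the category `𝒢` if it is a morphism in `𝒩`
(each coordinate function `v ↦ φ(v)_i` is constant, equal to `v ↦ v_j`, or to `v ↦ 1 - v_j`),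
witnessed by the function `γ_φ : [m] → ℕ` (`γ_φ(i) = 0` for constant coordinates and
`γ_φ(i) = j` otherwise, encoded below as `j + 1` for `j : Fin n`), and moreover `γ_φ` is
monotone on its support: for `i < i'` either `γ_φ(i') = 0` or `γ_φ(i) ≤ γ_φ(i')`. -/
def IsGMorphism {n m : ℕ} (φ : (Fin n → Bool) → (Fin m → Bool)) : Prop :=
  ∃ γ : Fin m → ℕ,
    (∀ i : Fin m,
      (γ i = 0 ∧ ∃ c : Bool, ∀ v, φ v i = c) ∨
      (∃ j : Fin n, γ i = (j : ℕ) + 1 ∧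
        ((∀ v, φ v i = v j) ∨ (∀ v, φ v i = !(v j))))) ∧
    ∀ i i' : Fin m, i < i' → γ i' = 0 ∨ γ i ≤ γ i'

section ProdRange
variable {M : Type*} [Monoid M]

def prodRange (G : ℕ → M) : ℕ → M
  | 0 => 1
  | t + 1 => prodRange G t * G t

lemma prodRange_congr {G G' : ℕ → M} {t : ℕ} (h : ∀ i < t, G i = G' i) :
    prodRange G t = prodRange G' t := by
  induction t with
  | zero => rfl
  | succ t ih => simp [prodRange, ih (fun i hi => h i (by omega)), h t (by omega)]

lemma prodRange_add (G : ℕ → M) (s t : ℕ) :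
    prodRange G (s + t) = prodRange G s * prodRange (fun i => G (s + i)) t := by
  induction t with
  | zero => simp [prodRange]
  | succ t ih =>
    rw [show s + (t + 1) = (s + t) + 1 from rfl]
    simp [prodRange, ih, mul_assoc]

lemma prodRange_eq_one {G : ℕ → M} {t : ℕ} (h : ∀ i < t, G i = 1) :
    prodRange G t = 1 := by
  induction t with
  | zero => rfl
  | succ t ih => simp [prodRange, ih fun i hi => h i (by omega), h t (by omega)]

lemma prodRange_single {G : ℕ → M} {t k : ℕ} (hk : k < t)
    (h : ∀ i < t, i ≠ k → G i = 1) : prodRange G t = G k := by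
  have ht : t = k + (1 + (t - k - 1)) := by omega
  rw [ht, prodRange_add, prodRange_add]
  rw [prodRange_eq_one (G := G) (fun i hi => h i (by omega) (by omega))]
  rw [prodRange_eq_one (fun i hi => h (k + (1 + i)) (by omega) (by omega))]
  simp [prodRange]

lemma prodRange_pair {G : ℕ → M} {t k1 k2 : ℕ} (h12 : k1 < k2) (hk : k2 < t)
    (h : ∀ i < t, i ≠ k1 → i ≠ k2 → G i = 1) : prodRange G t = G k1 * G k2 := by
  have ht : t = k2 + (t - k2) := by omega
  rw [ht, prodRange_add]
  rw [prodRange_single (t := k2) (k := k1) h12 (fun i hi hne => h i (by omega) hne (by omega))]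
  rw [prodRange_single (t := t - k2) (k := 0) (by omega)
    (fun i hi hne => h (k2 + i) (by omega) (by omega) (by omega))]
  norm_num

lemma ofFn_prod_eq_prodRange {k : ℕ} (g : Fin k → M) :
    (List.ofFn g).prod = prodRange (fun x => if h : x < k then g ⟨x, h⟩ else 1) k := by
  induction k with
  | zero => simp [prodRange]
  | succ k ih =>
    rw [List.ofFn_succ', List.concat_eq_append, List.prod_append, ih]
    simp only [List.prod_cons, List.prod_nil, mul_one]
    rw [show prodRange (fun x => if h : x < k + 1 then g ⟨x, h⟩ else 1) (k + 1)
        = prodRange (fun x => if h : x < k + 1 then g ⟨x, h⟩ else 1) k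
          * (if h : k < k + 1 then g ⟨k, h⟩ else 1) from rfl]
    congr 1
    · apply prodRange_congr
      intro i hi
      rw [dif_pos hi, dif_pos (Nat.lt_succ_of_lt hi)]
      rfl
    · simp
      rfl

/-- entries of a cube-type product -/
def entOf {k : ℕ} (g : Fin k → M) (v : Fin k → Bool) : ℕ → M :=
  fun x => if h : x < k then (if v ⟨x, h⟩ then g ⟨x, h⟩ else 1) else 1

lemma hom_tauCube {k : ℕ} {M' : Type*} [Group M'] (ψ : FreeGroup (Fin k) →* M')
    (u : Fin k → Bool) :
    ψ (tauCube k u) = prodRange (entOf (fun i => ψ (FreeGroup.of i)) u) k := by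
  unfold tauCube
  rw [map_list_prod, List.map_ofFn, ofFn_prod_eq_prodRange]
  congr 1
  funext x
  unfold entOf
  by_cases h : x < k
  · simp only [dif_pos h, Function.comp]
    by_cases hu : u ⟨x, h⟩ <;> simp [hu]
  · simp [dif_neg h]

lemma tauCube_eq_prodRange {k : ℕ} (u : Fin k → Bool) :
    tauCube k u = prodRange (entOf FreeGroup.of u) k := by
  have := hom_tauCube (MonoidHom.id (FreeGroup (Fin k))) u
  simpa using this

end ProdRange

section Splice
variable {m : ℕ}

lemma head_congr {M : Type*} [Monoid M] {m : ℕ} (g : Fin m → M) (u1 u2 : Fin m → Bool)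
    (t : ℕ) (h : ∀ i : Fin m, (i : ℕ) < t → u1 i = u2 i) :
    prodRange (entOf g u1) t = prodRange (entOf g u2) t := by
  apply prodRange_congr
  intro x hx
  unfold entOf
  by_cases hxm : x < m
  · rw [dif_pos hxm, dif_pos hxm, h ⟨x, hxm⟩ hx]
  · rw [dif_neg hxm, dif_neg hxm]

lemma tail_congr {M : Type*} [Monoid M] {m : ℕ} (g : Fin m → M) (u1 u2 : Fin m → Bool)
    (t s : ℕ) (h : ∀ i : Fin m, t ≤ (i : ℕ) → u1 i = u2 i) :
    prodRange (fun x => entOf g u1 (t + x)) s = prodRange (fun x => entOf g u2 (t + x)) s := by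
  apply prodRange_congr
  intro x hx
  unfold entOf
  by_cases hxm : t + x < m
  · rw [dif_pos hxm, dif_pos hxm, h ⟨t + x, hxm⟩ (Nat.le_add_right t x)]
  · rw [dif_neg hxm, dif_neg hxm]

lemma tauCube_splice (p q r b : Fin m → Bool) (t : ℕ) (htm : t ≤ m)
    (hh1 : ∀ i : Fin m, (i : ℕ) < t → b i = p i)
    (hh2 : ∀ i : Fin m, (i : ℕ) < t → r i = q i)
    (ht1 : ∀ i : Fin m, t ≤ (i : ℕ) → b i = r i)
    (ht2 : ∀ i : Fin m, t ≤ (i : ℕ) → p i = q i) :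
    tauCube m b = tauCube m p * (tauCube m q)⁻¹ * tauCube m r := by
  have hs : ∀ u : Fin m → Bool, tauCube m u
      = prodRange (entOf FreeGroup.of u) t
        * prodRange (fun x => entOf FreeGroup.of u (t + x)) (m - t) := by
    intro u
    rw [tauCube_eq_prodRange, ← prodRange_add]
    congr 1
    omega
  rw [hs b, hs p, hs q, hs r,
    head_congr _ b p t hh1, head_congr _ r q t hh2,
    tail_congr _ b r t (m - t) ht1, tail_congr _ p q t (m - t) ht2]
  group

end Splice

section Forward
variable {n m : ℕ} {φ : (Fin n → Bool) → (Fin m → Bool)} {γ : Fin m → ℕ}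
  {a : FreeGroup (Fin m)} {w : Fin n → FreeGroup (Fin m)}

lemma forward_eq
    (hγ : ∀ i : Fin m,
      (γ i = 0 ∧ ∃ c : Bool, ∀ v, φ v i = c) ∨
      (∃ j : Fin n, γ i = (j : ℕ) + 1 ∧
        ((∀ v, φ v i = v j) ∨ (∀ v, φ v i = !(v j)))))
    (hmono : ∀ i i' : Fin m, i < i' → γ i' = 0 ∨ γ i ≤ γ i')
    (ha : a = tauCube m (φ fun _ => false))
    (hw : ∀ j : Fin n, w j = a⁻¹ * tauCube m (φ fun k => decide (k = j)))
    (v : Fin n → Bool) :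
    tauCube m (φ v) = a * prodRange (entOf w v) n := by
  classical
  -- dependence helper
  have hdep : ∀ (i : Fin m) (u1 u2 : Fin n → Bool),
      (∀ j'' : Fin n, γ i = (j'' : ℕ) + 1 → u1 j'' = u2 j'') → φ u1 i = φ u2 i := by
    intro i u1 u2 hcoord
    rcases hγ i with ⟨_, c, hc⟩ | ⟨j'', hj'', hcase⟩
    · rw [hc, hc]
    · have heq := hcoord j'' hj''
      rcases hcase with h | h <;> rw [h, h, heq]
  -- key flipping step
  have key : ∀ (j : Fin n) (u : Fin n → Bool), u j = true → (∀ k : Fin n, j < k → u k = false) →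
      tauCube m (φ u) = tauCube m (φ (Function.update u j false)) * w j := by
    intro j u huj humax
    rw [hw j, ha]
    by_cases hact : ∃ i : Fin m, γ i = (j : ℕ) + 1
    · set T := Finset.univ.filter (fun i : Fin m => γ i = (j : ℕ) + 1) with hT
      have hTne : T.Nonempty := ⟨hact.choose, by simp [hT, hact.choose_spec]⟩
      set i0 := T.min' hTne with hi0def
      have hi0 : γ i0 = (j : ℕ) + 1 := (Finset.mem_filter.mp (T.min'_mem hTne)).2
      have hlow : ∀ i : Fin m, (i : ℕ) < (i0 : ℕ) → γ i ≠ (j : ℕ) + 1 := by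
        intro i hi hcontra
        have hle : i0 ≤ i := T.min'_le i (by simp [hT, hcontra])
        rw [Fin.le_def] at hle
        omega
      have hh1 : ∀ i : Fin m, (i : ℕ) < (i0 : ℕ) → φ u i = φ (Function.update u j false) i := by
        intro i hi
        apply hdep
        intro j'' hj''
        have hne : j'' ≠ j := fun e => hlow i hi (by rw [hj'', e])
        rw [Function.update_of_ne hne]
      have hh2 : ∀ i : Fin m, (i : ℕ) < (i0 : ℕ) →
          φ (fun k => decide (k = j)) i = φ (fun _ => false) i := by
        intro i hi
        apply hdep
        intro j'' hj''
        have hne : j'' ≠ j := fun e => hlow i hi (by rw [hj'', e])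
        simp [hne]
      have horder : ∀ (i : Fin m) (j'' : Fin n), (i0 : ℕ) ≤ (i : ℕ) → γ i = (j'' : ℕ) + 1 →
          (j : ℕ) ≤ (j'' : ℕ) := by
        intro i j'' hi hj''
        rcases Nat.lt_or_ge (i0 : ℕ) (i : ℕ) with hlt | hge
        · rcases hmono i0 i (Fin.lt_def.mpr hlt) with h0 | hle'
          · rw [hj''] at h0; omega
          · rw [hi0, hj''] at hle'; omega
        · have hEq : i0 = i := Fin.ext (by omega)
          rw [← hEq, hi0] at hj''
          omega
      have ht1 : ∀ i : Fin m, (i0 : ℕ) ≤ (i : ℕ) → φ u i = φ (fun k => decide (k = j)) i := by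
        intro i hi
        apply hdep
        intro j'' hj''
        have hle := horder i j'' hi hj''
        by_cases hje : j'' = j
        · subst hje; simp [huj]
        · have hlt : j < j'' := by
            rw [Fin.lt_def]
            have : (j : ℕ) ≠ (j'' : ℕ) := fun e => hje (Fin.ext e.symm)
            omega
          rw [humax j'' hlt]
          simp [hje]
      have ht2 : ∀ i : Fin m, (i0 : ℕ) ≤ (i : ℕ) →
          φ (Function.update u j false) i = φ (fun _ => false) i := by
        intro i hi
        apply hdep
        intro j'' hj''
        have hle := horder i j'' hi hj''
        by_cases hje : j'' = j
        · subst hje; simp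
        · have hlt : j < j'' := by
            rw [Fin.lt_def]
            have : (j : ℕ) ≠ (j'' : ℕ) := fun e => hje (Fin.ext e.symm)
            omega
          rw [Function.update_of_ne hje, humax j'' hlt]
      have hsp := tauCube_splice (φ (Function.update u j false)) (φ fun _ => false)
        (φ fun k => decide (k = j)) (φ u) (i0 : ℕ) i0.isLt.le hh1 hh2 ht1 ht2
      rw [hsp, mul_assoc]
    · have h1 : φ u = φ (Function.update u j false) := by
        funext i
        apply hdep
        intro j'' hj''
        have hne : j'' ≠ j := fun e => hact ⟨i, by rw [hj'', e]⟩
        rw [Function.update_of_ne hne]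
      have h2 : (φ fun k => decide (k = j)) = φ (fun _ => false) := by
        funext i
        apply hdep
        intro j'' hj''
        have hne : j'' ≠ j := fun e => hact ⟨i, by rw [hj'', e]⟩
        simp [hne]
      rw [← h1, h2]
      simp
  -- main induction on the number of true coordinates
  have main : ∀ (N : ℕ) (u : Fin n → Bool), (Finset.univ.filter fun k => u k = true).card = N →
      tauCube m (φ u) = a * prodRange (entOf w u) n := by
    intro N
    induction N with
    | zero =>
      intro u hu
      have hu' : u = fun _ => false := by
        funext k
        by_contra hk
        have hk' : k ∈ Finset.univ.filter (fun k => u k = true) := by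
          simp [Bool.not_eq_false] at hk
          simp [hk]
        rw [Finset.card_eq_zero] at hu
        rw [hu] at hk'
        exact absurd hk' (Finset.notMem_empty k)
      subst hu'
      rw [prodRange_eq_one, ha, mul_one]
      intro x hx
      unfold entOf
      by_cases h : x < n <;> simp [h]
    | succ c ih =>
      intro u hu
      have hne : (Finset.univ.filter fun k => u k = true).Nonempty := by
        rw [← Finset.card_pos, hu]; omega
      set j := (Finset.univ.filter fun k => u k = true).max' hne with hjdef
      have hj : u j = true := by
        have := (Finset.univ.filter fun k => u k = true).max'_mem hne
        simpa using this
      have hmax : ∀ k, j < k → u k = false := by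
        intro k hk
        by_contra hk'
        simp only [Bool.not_eq_false] at hk'
        have hkS : k ∈ Finset.univ.filter fun k => u k = true := by simp [hk']
        have := (Finset.univ.filter fun k => u k = true).le_max' k hkS
        exact absurd hk (not_lt.mpr this)
      have hcard : (Finset.univ.filter fun k => Function.update u j false k = true).card = c := by
        have hS : (Finset.univ.filter fun k => Function.update u j false k = true)
            = (Finset.univ.filter fun k => u k = true).erase j := by
          ext k
          by_cases hkj : k = j
          · subst hkj; simp
          · simp [Function.update_of_ne hkj, hkj]
        rw [hS, Finset.card_erase_of_mem (by simp [hj]), hu]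
        omega
      have IH := ih (Function.update u j false) hcard
      have hkey := key j u hj hmax
      have F1 : prodRange (entOf w u) n
          = prodRange (entOf w (Function.update u j false)) n * w j := by
        have hsplit : ∀ vv : Fin n → Bool, prodRange (entOf w vv) n
            = (prodRange (entOf w vv) (j : ℕ) * entOf w vv (j : ℕ))
              * prodRange (fun x => entOf w vv (((j : ℕ) + 1) + x)) (n - ((j : ℕ) + 1)) := by
          intro vv
          rw [show prodRange (entOf w vv) (j:ℕ) * entOf w vv (j:ℕ)
              = prodRange (entOf w vv) ((j:ℕ)+1) from rfl, ← prodRange_add]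
          congr 1
          omega
        have htail : ∀ vv : Fin n → Bool, (∀ k : Fin n, j < k → vv k = false) →
            prodRange (fun x => entOf w vv (((j : ℕ) + 1) + x)) (n - ((j : ℕ) + 1)) = 1 := by
          intro vv hvv
          apply prodRange_eq_one
          intro x hx
          unfold entOf
          have hlt : (j : ℕ) + 1 + x < n := by omega
          rw [dif_pos hlt, hvv ⟨(j : ℕ) + 1 + x, hlt⟩ (by rw [Fin.lt_def]; simp; omega)]
          simp
        have hmax' : ∀ k : Fin n, j < k → Function.update u j false k = false := by
          intro k hk
          rw [Function.update_of_ne (by intro e; subst e; exact lt_irrefl _ hk), hmax k hk]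
        have hheads : prodRange (entOf w u) (j : ℕ)
            = prodRange (entOf w (Function.update u j false)) (j : ℕ) := by
          apply prodRange_congr
          intro x hx
          unfold entOf
          by_cases h : x < n
          · rw [dif_pos h, dif_pos h,
              Function.update_of_ne (fun e => absurd hx (by rw [← e]; simp))]
          · rw [dif_neg h, dif_neg h]
        have hej : entOf w u (j : ℕ) = w j := by
          unfold entOf
          rw [dif_pos j.isLt]
          simp [hj]
        have hej' : entOf w (Function.update u j false) (j : ℕ) = 1 := by
          unfold entOf
          rw [dif_pos j.isLt]
          simp
        rw [hsplit u, hsplit (Function.update u j false), htail u hmax, htail _ hmax',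
          hheads, hej, hej']
        group
      rw [hkey, IH, F1, mul_assoc]
  exact main _ v rfl

end Forward

section EntProd
variable {M : Type*} [Monoid M] {k : ℕ}

lemma entProd_allone (g : Fin k → M) (hg : ∀ x, g x = 1) (v : Fin k → Bool) :
    prodRange (entOf g v) k = 1 := by
  apply prodRange_eq_one
  intro x hx
  simp [entOf, hg]

lemma entProd_zeroVec (g : Fin k → M) :
    prodRange (entOf g (fun _ => false)) k = 1 := by
  apply prodRange_eq_one
  intro x hx
  simp [entOf]

lemma entProd_almostsingle (g : Fin k → M) (j0 : Fin k) (hg : ∀ x, x ≠ j0 → g x = 1)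
    (v : Fin k → Bool) : prodRange (entOf g v) k = if v j0 then g j0 else 1 := by
  rw [prodRange_single (k := (j0 : ℕ)) j0.isLt ?side]
  case side =>
    intro x hx hne
    unfold entOf
    by_cases hxk : x < k
    · rw [dif_pos hxk, hg ⟨x, hxk⟩ (fun e => hne (congrArg Fin.val e))]
      simp
    · rw [dif_neg hxk]
  · unfold entOf
    rw [dif_pos j0.isLt]

lemma entProd_single (g : Fin k → M) (j0 : Fin k) :
    prodRange (entOf g (fun x => decide (x = j0))) k = g j0 := by
  rw [prodRange_single (k := (j0 : ℕ)) j0.isLt ?side]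
  case side =>
    intro x hx hne
    unfold entOf
    by_cases hxk : x < k
    · rw [dif_pos hxk]
      have : (⟨x, hxk⟩ : Fin k) ≠ j0 := fun e => hne (congrArg Fin.val e)
      simp [this]
    · rw [dif_neg hxk]
  · unfold entOf
    rw [dif_pos j0.isLt]
    simp

lemma entProd_pair (g : Fin k → M) (j1 j2 : Fin k) (h12 : j1 < j2) :
    prodRange (entOf g (fun x => decide (x = j1) || decide (x = j2))) k = g j1 * g j2 := by
  rw [prodRange_pair (k1 := (j1 : ℕ)) (k2 := (j2 : ℕ)) (Fin.lt_def.mp h12) j2.isLt ?side]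
  case side =>
    intro x hx hne1 hne2
    unfold entOf
    by_cases hxk : x < k
    · rw [dif_pos hxk]
      have h1 : (⟨x, hxk⟩ : Fin k) ≠ j1 := fun e => hne1 (congrArg Fin.val e)
      have h2 : (⟨x, hxk⟩ : Fin k) ≠ j2 := fun e => hne2 (congrArg Fin.val e)
      simp [h1, h2]
    · rw [dif_neg hxk]
  · unfold entOf
    rw [dif_pos j1.isLt, dif_pos j2.isLt]
    have hne : j1 ≠ j2 := ne_of_lt h12
    simp [hne, hne.symm]

lemma entProd_almostpair (g : Fin k → M) (k1 k2 : Fin k) (h12 : k1 < k2)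
    (hg : ∀ x, x ≠ k1 → x ≠ k2 → g x = 1) (v : Fin k → Bool) :
    prodRange (entOf g v) k = (if v k1 then g k1 else 1) * (if v k2 then g k2 else 1) := by
  rw [prodRange_pair (k1 := (k1 : ℕ)) (k2 := (k2 : ℕ)) (Fin.lt_def.mp h12) k2.isLt ?side]
  case side =>
    intro x hx hne1 hne2
    unfold entOf
    by_cases hxk : x < k
    · rw [dif_pos hxk,
        hg ⟨x, hxk⟩ (fun e => hne1 (congrArg Fin.val e)) (fun e => hne2 (congrArg Fin.val e))]
      simp
    · rw [dif_neg hxk]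
  · unfold entOf
    rw [dif_pos k1.isLt, dif_pos k2.isLt]

end EntProd

section Reverse
variable {n m : ℕ} {φ : (Fin n → Bool) → (Fin m → Bool)}
  {a : FreeGroup (Fin m)} {h : FreeGroup (Fin n) →* FreeGroup (Fin m)}

/-- boolean to integer -/
def b2i (b : Bool) : ℤ := if b then 1 else 0

lemma b2i_cases (b : Bool) : b2i b = 0 ∨ b2i b = 1 := by cases b <;> simp [b2i]

lemma b2i_inj {b1 b2 : Bool} (h : b2i b1 = b2i b2) : b1 = b2 := by
  cases b1 <;> cases b2 <;> simp_all [b2i]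

lemma masterEq {M' : Type*} [Group M'] (ψ : FreeGroup (Fin m) →* M')
    (hK : ∀ v, tauCube m (φ v) = a * h (tauCube n v)) (v : Fin n → Bool) :
    ψ (tauCube m (φ v)) = ψ a * prodRange (entOf (fun j => ψ (h (FreeGroup.of j))) v) n := by
  rw [hK v, map_mul]
  congr 1
  have := hom_tauCube (ψ.comp h) v
  simpa using this

lemma reverse_coord (hK : ∀ v, tauCube m (φ v) = a * h (tauCube n v)) (i : Fin m) :
    (∃ c, ∀ v, φ v i = c) ∨ ∃ j : Fin n, (∀ v, φ v i = v j) ∨ (∀ v, φ v i = !(v j)) := by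
  classical
  set ψ : FreeGroup (Fin m) →* Multiplicative ℤ :=
    FreeGroup.lift (fun x => if x = i then Multiplicative.ofAdd (1 : ℤ) else 1) with hψ
  have hψof : ∀ x : Fin m, ψ (FreeGroup.of x) = if x = i then Multiplicative.ofAdd (1 : ℤ) else 1 := by
    intro x; simp [hψ]
  have htau : ∀ u : Fin m → Bool, ψ (tauCube m u) = Multiplicative.ofAdd (b2i (u i)) := by
    intro u
    rw [hom_tauCube]
    have := entProd_almostsingle (fun x : Fin m => ψ (FreeGroup.of x)) i
      (by intro x hx; show ψ (FreeGroup.of x) = 1; rw [hψof, if_neg hx]) u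
    rw [this, hψof, if_pos rfl]
    cases u i <;> simp [b2i]
  -- master in ℤ form
  set E : Fin n → Multiplicative ℤ := fun j => ψ (h (FreeGroup.of j)) with hE
  have masterI : ∀ v : Fin n → Bool, Multiplicative.ofAdd (b2i (φ v i))
      = ψ a * prodRange (entOf E v) n := by
    intro v
    rw [← htau (φ v)]
    exact masterEq ψ hK v
  have h0 : Multiplicative.ofAdd (b2i (φ (fun _ => false) i)) = ψ a := by
    rw [masterI, entProd_zeroVec, mul_one]
  by_cases hC : ∀ j : Fin n, E j = 1
  · left
    refine ⟨φ (fun _ => false) i, fun v => ?_⟩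
    apply b2i_inj
    have h1 := masterI v
    rw [entProd_allone E hC, mul_one, ← h0] at h1
    exact Multiplicative.ofAdd.injective h1
  · right
    push_neg at hC
    obtain ⟨j0, hj0⟩ := hC
    -- all other coefficients vanish
    have hother : ∀ j : Fin n, j ≠ j0 → E j = 1 := by
      intro j hj
      by_contra hj'
      -- get the four equations
      rcases lt_or_gt_of_ne hj with hlt | hgt
      all_goals {
        first
        | (have h2 := masterI (fun x => decide (x = j) || decide (x = j0))
           rw [entProd_pair E j j0 hlt] at h2)
        | (have h2 := masterI (fun x => decide (x = j0) || decide (x = j))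
           rw [entProd_pair E j0 j hgt] at h2)
        have hdj := masterI (fun x => decide (x = j))
        rw [entProd_single E j] at hdj
        have hdj0 := masterI (fun x => decide (x = j0))
        rw [entProd_single E j0] at hdj0
        -- convert to ℤ
        have z0 := congrArg Multiplicative.toAdd h0
        have z1 := congrArg Multiplicative.toAdd hdj
        have z2 := congrArg Multiplicative.toAdd hdj0
        have z3 := congrArg Multiplicative.toAdd h2
        simp only [toAdd_mul, toAdd_ofAdd] at z0 z1 z2 z3
        have c1 : Multiplicative.toAdd (E j) ≠ 0 := by
          intro e; exact hj' (by rw [← ofAdd_toAdd (E j), e, ofAdd_zero])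
        have c2 : Multiplicative.toAdd (E j0) ≠ 0 := by
          intro e; exact hj0 (by rw [← ofAdd_toAdd (E j0), e, ofAdd_zero])
        rcases b2i_cases (φ (fun _ => false) i) with e0 | e0 <;>
          rcases b2i_cases (φ (fun x => decide (x = j)) i) with e1 | e1 <;>
          rcases b2i_cases (φ (fun x => decide (x = j0)) i) with e2 | e2 <;>
          rcases b2i_cases (φ (fun x => decide (x = j) || decide (x = j0)) i) with e3 | e3 <;>
          rcases b2i_cases (φ (fun x => decide (x = j0) || decide (x = j)) i) with e4 | e4 <;>
          omega
      }
    have hsingle : ∀ v : Fin n → Bool,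
        b2i (φ v i) = Multiplicative.toAdd (ψ a)
          + (if v j0 then Multiplicative.toAdd (E j0) else 0) := by
      intro v
      have h1 := masterI v
      rw [entProd_almostsingle E j0 hother] at h1
      have := congrArg Multiplicative.toAdd h1
      simp only [toAdd_mul, toAdd_ofAdd, apply_ite Multiplicative.toAdd, toAdd_one] at this
      exact this
    have z0 : b2i (φ (fun _ => false) i) = Multiplicative.toAdd (ψ a) := by
      have := hsingle (fun _ => false)
      simpa using this
    have zδ : b2i (φ (fun x => decide (x = j0)) i)
        = Multiplicative.toAdd (ψ a) + Multiplicative.toAdd (E j0) := by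
      have := hsingle (fun x => decide (x = j0))
      simpa using this
    have cne : Multiplicative.toAdd (E j0) ≠ 0 := by
      intro e; exact hj0 (by rw [← ofAdd_toAdd (E j0), e, ofAdd_zero])
    rcases b2i_cases (φ (fun _ => false) i) with e0 | e0
    · -- A = 0, so C = 1 and φ v i = v j0
      refine ⟨j0, Or.inl fun v => ?_⟩
      apply b2i_inj
      have hv := hsingle v
      have hC1 : Multiplicative.toAdd (E j0) = 1 := by
        rcases b2i_cases (φ (fun x => decide (x = j0)) i) with e1 | e1 <;> omega
      cases hvj : v j0
      · rw [hvj] at hv; simp at hv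
        rw [show b2i false = 0 from rfl]; omega
      · rw [hvj] at hv; simp at hv
        rw [show b2i true = 1 from rfl]; omega
    · -- A = 1, so C = -1 and φ v i = !(v j0)
      refine ⟨j0, Or.inr fun v => ?_⟩
      apply b2i_inj
      have hv := hsingle v
      have hC1 : Multiplicative.toAdd (E j0) = -1 := by
        rcases b2i_cases (φ (fun x => decide (x = j0)) i) with e1 | e1 <;> omega
      cases hvj : v j0
      · rw [hvj] at hv; simp at hv
        rw [show b2i (!false) = 1 from rfl]; omega
      · rw [hvj] at hv; simp at hv
        rw [show b2i (!true) = 0 from rfl]; omega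

end Reverse

section ReverseMono
variable {n m : ℕ} {φ : (Fin n → Bool) → (Fin m → Bool)}
  {a : FreeGroup (Fin m)} {h : FreeGroup (Fin n) →* FreeGroup (Fin m)}

lemma reverse_mono (hK : ∀ v, tauCube m (φ v) = a * h (tauCube n v))
    {i i' : Fin m} {j j' : Fin n} (hii' : i < i') (hjj' : j' < j)
    (hi : (∀ v, φ v i = v j) ∨ (∀ v, φ v i = !(v j)))
    (hi' : (∀ v, φ v i' = v j') ∨ (∀ v, φ v i' = !(v j'))) : False := by
  classical
  set s : Equiv.Perm (Fin 3) := Equiv.swap 0 1 with hs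
  set t : Equiv.Perm (Fin 3) := Equiv.swap 1 2 with ht
  have hii'ne : i ≠ i' := ne_of_lt hii'
  have hjne : j ≠ j' := (ne_of_lt hjj').symm
  set ψ : FreeGroup (Fin m) →* Equiv.Perm (Fin 3) :=
    FreeGroup.lift (fun x => if x = i then s else if x = i' then t else 1) with hψ
  have hψof : ∀ x, ψ (FreeGroup.of x) = if x = i then s else if x = i' then t else 1 := by
    intro x; simp [hψ]
  have htau : ∀ u : Fin m → Bool,
      ψ (tauCube m u) = (if u i then s else 1) * (if u i' then t else 1) := by
    intro u
    rw [hom_tauCube]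
    have := entProd_almostpair (fun x : Fin m => ψ (FreeGroup.of x)) i i' hii'
      (by intro x h1 h2; show ψ (FreeGroup.of x) = 1; rw [hψof, if_neg h1, if_neg h2]) u
    rw [this, hψof i, hψof i']
    simp [Ne.symm hii'ne]
  set E : Fin n → Equiv.Perm (Fin 3) := fun x => ψ (h (FreeGroup.of x)) with hE
  have master : ∀ v, (if φ v i then s else 1) * (if φ v i' then t else 1)
      = ψ a * prodRange (entOf E v) n := by
    intro v
    rw [← htau (φ v)]
    exact masterEq ψ hK v
  have hvi : ∀ v : Fin n → Bool,
      φ v i = (if v j then !(φ (fun _ => false) i) else φ (fun _ => false) i) := by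
    rcases hi with hh | hh <;> intro v <;> rw [hh, hh] <;> cases v j <;> simp
  have hvi' : ∀ v : Fin n → Bool,
      φ v i' = (if v j' then !(φ (fun _ => false) i') else φ (fun _ => false) i') := by
    rcases hi' with hh | hh <;> intro v <;> rw [hh, hh] <;> cases v j' <;> simp
  set Q := φ (fun _ => false) i with hQdef
  set Q' := φ (fun _ => false) i' with hQ'def
  have val1 : φ (fun x => decide (x = j')) i = Q := by rw [hvi]; simp [hjne]
  have val2 : φ (fun x => decide (x = j')) i' = !Q' := by rw [hvi']; simp
  have val3 : φ (fun x => decide (x = j)) i = !Q := by rw [hvi]; simp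
  have val4 : φ (fun x => decide (x = j)) i' = Q' := by rw [hvi']; simp [ne_of_lt hjj']
  have val5 : φ (fun x => decide (x = j') || decide (x = j)) i = !Q := by rw [hvi]; simp
  have val6 : φ (fun x => decide (x = j') || decide (x = j)) i' = !Q' := by rw [hvi']; simp
  have E0 : (if Q then s else 1) * (if Q' then t else 1) = ψ a := by
    have := master (fun _ => false)
    rwa [entProd_zeroVec, mul_one] at this
  have E1 : (if Q then s else 1) * (if !Q' then t else 1) = ψ a * E j' := by
    have := master (fun x => decide (x = j'))
    rwa [entProd_single, val1, val2] at this
  have E2 : (if !Q then s else 1) * (if Q' then t else 1) = ψ a * E j := by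
    have := master (fun x => decide (x = j))
    rwa [entProd_single, val3, val4] at this
  have E3 : (if !Q then s else 1) * (if !Q' then t else 1) = ψ a * (E j' * E j) := by
    have := master (fun x => decide (x = j') || decide (x = j))
    rwa [entProd_pair E j' j hjj', val5, val6] at this
  have hEj' : E j' = (ψ a)⁻¹ * ((if Q then s else 1) * (if !Q' then t else 1)) := by
    rw [eq_inv_mul_iff_mul_eq]; exact E1.symm
  have hEj : E j = (ψ a)⁻¹ * ((if !Q then s else 1) * (if Q' then t else 1)) := by
    rw [eq_inv_mul_iff_mul_eq]; exact E2.symm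
  have final : (if !Q then s else 1) * (if !Q' then t else 1)
      = ((if Q then s else 1) * (if !Q' then t else 1))
        * (((if Q then s else 1) * (if Q' then t else 1)))⁻¹
        * ((if !Q then s else 1) * (if Q' then t else 1)) := by
    rw [E3, hEj', hEj, ← E0]
    group
  rw [hs, ht] at final
  cases hQ : Q <;> cases hQ' : Q' <;> rw [hQ, hQ'] at final <;>
    first
    | (simp at final; revert final; decide)
    | (simp at final)
    | (revert final; decide)

end ReverseMono

theorem isGMorphism_iff_extends_affine_free {n m : ℕ}
    (φ : (Fin n → Bool) → (Fin m → Bool)) :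
    IsGMorphism φ ↔
      ∃ f : FreeGroup (Fin n) → FreeGroup (Fin m), IsAffineMorphism f ∧
        ∀ v : Fin n → Bool, f (tauCube n v) = tauCube m (φ v) := by
  constructor
  · rintro ⟨γ, hγ, hmono⟩
    refine ⟨fun x => (tauCube m (φ fun _ => false)) * FreeGroup.lift
        (fun j : Fin n => (tauCube m (φ fun _ => false))⁻¹
          * tauCube m (φ fun k => decide (k = j))) x,
      ⟨tauCube m (φ fun _ => false), FreeGroup.lift
        (fun j : Fin n => (tauCube m (φ fun _ => false))⁻¹
          * tauCube m (φ fun k => decide (k = j))), fun x => rfl⟩, ?_⟩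
    intro v
    have hl : (fun i : Fin n => FreeGroup.lift
        (fun j : Fin n => (tauCube m (φ fun _ => false))⁻¹
          * tauCube m (φ fun k => decide (k = j))) (FreeGroup.of i))
        = fun j : Fin n => (tauCube m (φ fun _ => false))⁻¹
          * tauCube m (φ fun k => decide (k = j)) :=
      funext fun i => FreeGroup.lift_apply_of
    show (tauCube m (φ fun _ => false)) * FreeGroup.lift _ (tauCube n v) = tauCube m (φ v)
    rw [hom_tauCube, hl]
    exact (forward_eq hγ hmono rfl (fun j => rfl) v).symm
  · rintro ⟨f, ⟨a, h, haff⟩, hf⟩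
    classical
    have hK : ∀ v, tauCube m (φ v) = a * h (tauCube n v) := fun v => by
      rw [← hf v, haff]
    refine ⟨fun i => if hp : ∃ j : Fin n, (∀ v, φ v i = v j) ∨ (∀ v, φ v i = !(v j))
        then (hp.choose : ℕ) + 1 else 0, ?_, ?_⟩
    · intro i
      by_cases hp : ∃ j : Fin n, (∀ v, φ v i = v j) ∨ (∀ v, φ v i = !(v j))
      · exact Or.inr ⟨hp.choose, by simp only [dif_pos hp], hp.choose_spec⟩
      · refine Or.inl ⟨by simp only [dif_neg hp], ?_⟩
        rcases reverse_coord hK i with ⟨c, hc⟩ | hj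
        · exact ⟨c, hc⟩
        · exact absurd hj hp
    · intro i i' hlt
      by_cases hp' : ∃ j : Fin n, (∀ v, φ v i' = v j) ∨ (∀ v, φ v i' = !(v j))
      · by_cases hp : ∃ j : Fin n, (∀ v, φ v i = v j) ∨ (∀ v, φ v i = !(v j))
        · right
          simp only [dif_pos hp, dif_pos hp']
          have hspec := hp.choose_spec
          have hspec' := hp'.choose_spec
          by_contra hcon
          push_neg at hcon
          have hjj' : hp'.choose < hp.choose := by
            rw [Fin.lt_def]; omega
          exact reverse_mono hK hlt hjj' hspec hspec'
        · right
          simp only [dif_neg hp]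
          exact Nat.zero_le _
      · left
        simp only [dif_neg hp']
end

section
/- Let G be a group, Z a subgroup of the center of G, and n ∈ ℕ. Let c₁, c₂ : {0,1}^n → G be simple n-cubes in G such that c₁(v)⁻¹·c₂(v) ∈ Z for every v ∈ {0,1}^n. Then the map f : {0,1}^n → Z defined by f(v) = c₁(v)⁻¹·c₂(v) is a simple n-cube in the group Z, i.e. there exist z₀, z₁, …, z_n ∈ Z with f(v) = z₀·z₁^{v₁}·…·z_n^{v_n} for all v. -/
/-- A simple `k`-cube in a group `G` is a function `v ↦ g₀ * g₁^{v₁} * ⋯ * g_k^{v_k}`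
(left-to-right product). -/
def IsSimpleCube {G : Type*} [Group G] {k : ℕ} (c : (Fin k → Bool) → G) : Prop :=
  ∃ (g₀ : G) (g : Fin k → G), ∀ v,
    c v = g₀ * (List.ofFn fun i => if v i then g i else 1).prod

theorem prod_ite_single {M : Type*} [Monoid M] : ∀ {k : ℕ} (i : Fin k) (x : Fin k → M),
    (List.ofFn fun j => if j = i then x j else 1).prod = x i := by
  intro k
  induction k with
  | zero => exact fun i => i.elim0
  | succ k ih =>
    intro i x
    rw [List.ofFn_succ]
    cases i using Fin.cases with
    | zero =>
      have h : (List.ofFn fun j : Fin k => if j.succ = (0 : Fin (k+1)) then x j.succ else 1).prod = 1 := by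
        apply List.prod_eq_one
        intro y hy
        simp only [List.mem_ofFn] at hy
        obtain ⟨j, rfl⟩ := hy
        simp [Fin.succ_ne_zero]
      simp [h]
    | succ i' =>
      have h := ih i' (fun j => x j.succ)
      simp only [Fin.succ_inj] at h ⊢
      simp [h, (Fin.succ_ne_zero i').symm]

theorem prod_mul_central {G : Type*} [Group G] : ∀ {k : ℕ} (v : Fin k → Bool) (g c : Fin k → G),
    (∀ i x, c i * x = x * c i) →
    (List.ofFn fun i => if v i then g i * c i else 1).prod =
      (List.ofFn fun i => if v i then g i else 1).prod *
        (List.ofFn fun i => if v i then c i else 1).prod := by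
  intro k
  induction k with
  | zero => intro v g c _; simp
  | succ k ih =>
    intro v g c hc
    rw [List.ofFn_succ, List.ofFn_succ, List.ofFn_succ, List.prod_cons, List.prod_cons,
      List.prod_cons, ih (fun j => v j.succ) (fun j => g j.succ) (fun j => c j.succ)
        (fun j x => hc j.succ x)]
    have hc0 : ∀ x, (if v 0 then c 0 else 1) * x = x * (if v 0 then c 0 else 1) := by
      intro x; by_cases h : v 0 <;> simp [h, hc 0 x]
    have : (if v 0 then g 0 * c 0 else 1) = (if v 0 then g 0 else 1) * (if v 0 then c 0 else 1) := by
      by_cases h : v 0 <;> simp [h]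
    rw [this, mul_assoc, mul_assoc, ← mul_assoc (if v 0 then c 0 else 1), hc0, mul_assoc]

theorem ratio_cube_in_central_subgroup {G : Type*} [Group G] (Z : Subgroup G)
    (hZ : Z ≤ Subgroup.center G) (n : ℕ) (c₁ c₂ : (Fin n → Bool) → G)
    (hc₁ : IsSimpleCube c₁) (hc₂ : IsSimpleCube c₂)
    (hZmem : ∀ v, (c₁ v)⁻¹ * c₂ v ∈ Z) :
    ∃ (z₀ : Z) (z : Fin n → Z), ∀ v : Fin n → Bool,
      (c₁ v)⁻¹ * c₂ v =
        (z₀ : G) * (List.ofFn fun i => if v i then (z i : G) else 1).prod := by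
  obtain ⟨g₀, g, hg⟩ := hc₁
  obtain ⟨h₀, h, hh⟩ := hc₂
  have hones : (List.ofFn fun _ : Fin n => (1 : G)).prod = 1 := by simp
  have hv0 : ∀ i : Fin n, ((fun _ : Fin n => false) i = true) = False := by simp
  -- a := g₀⁻¹ * h₀ ∈ Z
  have ha : g₀⁻¹ * h₀ ∈ Z := by
    have := hZmem (fun _ => false)
    simpa [hg, hh] using this
  have hacen : ∀ x : G, (g₀⁻¹ * h₀) * x = x * (g₀⁻¹ * h₀) := by
    intro x
    exact ((Subgroup.mem_center_iff.mp (hZ ha)) x).symm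
  -- each g i⁻¹ * h i ∈ Z
  have hz : ∀ i : Fin n, (g i)⁻¹ * h i ∈ Z := by
    intro i
    have hm := hZmem (fun j => j = i)
    have e1 : c₁ (fun j => decide (j = i)) = g₀ * g i := by
      rw [hg]
      congr 1
      have := prod_ite_single i g
      simpa using this
    have e2 : c₂ (fun j => decide (j = i)) = h₀ * h i := by
      rw [hh]
      congr 1
      have := prod_ite_single i h
      simpa using this
    rw [e1, e2] at hm
    have key : (g i)⁻¹ * h i = (g₀⁻¹ * h₀)⁻¹ * ((g₀ * g i)⁻¹ * (h₀ * h i)) := by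
      rw [mul_inv_rev, mul_inv_rev]
      have : (g i)⁻¹ * g₀⁻¹ * (h₀ * h i) = (g i)⁻¹ * (g₀⁻¹ * h₀) * h i := by group
      rw [this, ← hacen ((g i)⁻¹)]
      group
    rw [key]
    exact Z.mul_mem (Z.inv_mem ha) hm
  refine ⟨⟨g₀⁻¹ * h₀, ha⟩, fun i => ⟨(g i)⁻¹ * h i, hz i⟩, fun v => ?_⟩
  have hcen : ∀ (i : Fin n) (x : G), ((g i)⁻¹ * h i) * x = x * ((g i)⁻¹ * h i) := by
    intro i x
    exact ((Subgroup.mem_center_iff.mp (hZ (hz i))) x).symm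
  have hprod := prod_mul_central v g (fun i => (g i)⁻¹ * h i) hcen
  have hhg : ∀ i : Fin n, h i = g i * ((g i)⁻¹ * h i) := by intro i; group
  have hh' : (List.ofFn fun i => if v i then h i else 1) =
      (List.ofFn fun i => if v i then g i * ((g i)⁻¹ * h i) else 1) := by
    congr 1
    funext i
    rw [← hhg i]
  rw [hg, hh, hh', hprod]
  simp only [mul_inv_rev]
  rw [← mul_assoc, ← mul_assoc]
  congr 1
  have h2 : (List.ofFn fun i => if v i then g i else 1).prod⁻¹ * g₀⁻¹ * h₀ *
      (List.ofFn fun i => if v i then g i else 1).prod =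
      (List.ofFn fun i => if v i then g i else 1).prod⁻¹ *
      ((g₀⁻¹ * h₀) * (List.ofFn fun i => if v i then g i else 1).prod) := by group
  rw [h2, hacen]
  group
end

section
/- Let G be a group, n ≥ 1, and let f : {0,1}^n \ {1^n} → G be a function such that for every i ∈ [n] the composition f ∘ e^n_{i,0} : {0,1}^{n-1} → G is a simple (n−1)-cube in G. Then there exists a simple n-cube c : {0,1}^n → G in G such that c(v) = f(v) for every v ∈ {0,1}^n with v ≠ 1^n. -/
/-- Helper: the last coordinate of a simple cube acts by right multiplication by a
fixed element. -/
lemma cube_step {G : Type*} [Group G] {k : ℕ} {c : (Fin (k + 1) → Bool) → G}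
    (hc : IsSimpleCube c) :
    ∃ d : G, ∀ x : Fin (k + 1) → Bool, x (Fin.last k) = false →
      c (Function.update x (Fin.last k) true) = c x * d := by
  obtain ⟨g₀, g, hg⟩ := hc
  refine ⟨g (Fin.last k), fun x hx => ?_⟩
  rw [hg, hg, List.ofFn_succ', List.ofFn_succ', List.prod_concat, List.prod_concat]
  have h1 : ∀ i : Fin k, Function.update x (Fin.last k) true i.castSucc = x i.castSucc :=
    fun i => Function.update_of_ne (Fin.castSucc_lt_last i).ne _ _
  simp [h1, hx, mul_assoc]

lemma succAbove_last_of_ne {m : ℕ} (i : Fin (m + 2)) (hi : i ≠ Fin.last (m + 1)) :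
    i.succAbove (Fin.last m) = Fin.last (m + 1) := by
  have hival : (i : ℕ) ≠ m + 1 := fun h => hi (Fin.ext (by simp [h]))
  have hlt := i.isLt
  have hle : i ≤ (Fin.last m).castSucc := by
    simp only [Fin.le_def, Fin.coe_castSucc, Fin.val_last]
    omega
  rw [Fin.succAbove_of_le_castSucc _ _ hle, Fin.succ_last]

/-- Helper: inserting `false` commutes with updating the last coordinate, when the
insertion position is not the last coordinate. -/
lemma insertNth_update_last {m : ℕ} (i : Fin (m + 2)) (hi : i ≠ Fin.last (m + 1))
    (x : Fin (m + 1) → Bool) (b : Bool) :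
    (i.insertNth false (Function.update x (Fin.last m) b) : Fin (m + 2) → Bool) =
      Function.update (i.insertNth false x : Fin (m + 2) → Bool) (Fin.last (m + 1)) b := by
  have hib := succAbove_last_of_ne i hi
  funext j
  induction j using i.succAboveCases with
  | x =>
      rw [Fin.insertNth_apply_same, Function.update_of_ne hi, Fin.insertNth_apply_same]
  | p k =>
      rw [Fin.insertNth_apply_succAbove]
      by_cases hk : k = Fin.last m
      · subst hk
        rw [hib, Function.update_self, Function.update_self]
      · have hj : i.succAbove k ≠ Fin.last (m + 1) := by
          rw [← hib]; exact fun h => hk (Fin.succAbove_right_injective h)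
        rw [Function.update_of_ne hk, Function.update_of_ne hj,
          Fin.insertNth_apply_succAbove]

/-- Corner completion for simple cubes: if all the lower faces `f ∘ e^n_{i,0}` of a
function defined off the all-ones vertex are simple cubes, then the corner completes
to a simple cube. Here the face embedding `e^n_{i,0}` is `Fin.insertNth i false`. -/
theorem corner_completion_simpleCube {G : Type*} [Group G] (n : ℕ)
    (f : (Fin (n + 1) → Bool) → G)
    (hface : ∀ i : Fin (n + 1),
      IsSimpleCube (fun x : Fin n → Bool => f (i.insertNth false x))) :
    ∃ c : (Fin (n + 1) → Bool) → G, IsSimpleCube c ∧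
      ∀ v : Fin (n + 1) → Bool, v ≠ (fun _ => true) → c v = f v := by
  obtain _ | m := n
  · -- one-dimensional case
    refine ⟨fun _ => f (fun _ => false), ⟨f (fun _ => false), fun _ => 1, fun v => by
      simp [List.ofFn_succ]⟩, fun v hv => ?_⟩
    have hv0 : v = (fun _ => false) := by
      funext j
      have h0 : v 0 ≠ true := fun h => hv (funext fun j => by
        have hj : j = 0 := Fin.eq_zero _
        rw [hj, h])
      have hj : j = 0 := Fin.eq_zero _
      rw [hj]
      exact Bool.not_eq_true _ |>.mp h0
    show f (fun _ => false) = f v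
    rw [hv0]
  · set L : Fin (m + 2) := Fin.last (m + 1) with hL
    -- step elements for each face
    have hstep : ∀ i : Fin (m + 2), i ≠ L → ∃ d : G,
        ∀ v : Fin (m + 2) → Bool, v i = false → v L = false →
          f (Function.update v L true) = f v * d := by
      intro i hi
      obtain ⟨d, hd⟩ := cube_step (hface i)
      refine ⟨d, fun v hvi hvL => ?_⟩
      have hib := succAbove_last_of_ne i hi
      have hx : (Fin.removeNth i v) (Fin.last m) = false := by
        show v (i.succAbove (Fin.last m)) = false
        rw [hib]; exact hvL
      have hv : i.insertNth false (Fin.removeNth i v) = v := by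
        have h := Fin.insertNth_self_removeNth i v
        rwa [hvi] at h
      have h := hd (Fin.removeNth i v) hx
      rwa [insertNth_update_last i hi, hv] at h
    have h0L : (0 : Fin (m + 2)) ≠ L := by
      simp [hL, Fin.ext_iff]
    obtain ⟨b, hb⟩ := hstep 0 h0L
    -- key step: off the corner, flipping the last coordinate multiplies by `b`
    have hkey : ∀ v : Fin (m + 2) → Bool, v L = true → v ≠ (fun _ => true) →
        f v = f (Function.update v L false) * b := by
      intro v hvL hv
      obtain ⟨j, hj⟩ : ∃ j, v j ≠ true := Function.ne_iff.mp hv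
      have hjL : j ≠ L := fun h => hj (h ▸ hvL)
      have hjf : v j = false := Bool.not_eq_true _ |>.mp hj
      obtain ⟨d, hd⟩ := hstep j hjL
      have hdb : d = b := by
        have hz := hd (fun _ => false) rfl rfl
        have hz0 := hb (fun _ => false) rfl rfl
        exact mul_left_cancel (hz.symm.trans hz0)
      set w := Function.update v L false with hw
      have hwi : w j = false := by rw [hw, Function.update_of_ne hjL]; exact hjf
      have hwL : w L = false := Function.update_self _ _ _
      have huw : Function.update w L true = v := by
        rw [hw, Function.update_idem, ← hvL, Function.update_eq_self]
      have h := hd w hwi hwL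
      rw [huw, hdb] at h
      exact h
    -- the cube from the last face
    obtain ⟨g₀, g, hg⟩ := hface L
    refine ⟨fun v => g₀ * (List.ofFn fun i => if v i then Fin.snoc g b i else 1).prod,
      ⟨g₀, Fin.snoc g b, fun v => rfl⟩, fun v hv => ?_⟩
    have hprod : ∀ v : Fin (m + 2) → Bool,
        (List.ofFn fun i => if v i then Fin.snoc g b i else 1).prod =
          (List.ofFn fun i : Fin (m + 1) => if v i.castSucc then g i else 1).prod *
            (if v L then b else 1) := by
      intro v
      rw [List.ofFn_succ', List.prod_concat]
      congr 1
      · exact congrArg List.prod (congrArg List.ofFn (funext fun i => by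
          rw [Fin.snoc_castSucc]))
      · rw [← hL, Fin.snoc_last]
    have hfalse : ∀ v : Fin (m + 2) → Bool, v L = false →
        g₀ * (List.ofFn fun i => if v i then Fin.snoc g b i else 1).prod = f v := by
      intro v hvL
      have hv' : L.insertNth false (fun i => v i.castSucc) = v := by
        rw [Fin.insertNth_last']
        funext j
        induction j using Fin.lastCases with
        | last => rw [Fin.snoc_last, ← hL, hvL]
        | cast k => rw [Fin.snoc_castSucc]
      have h := hg (fun i => v i.castSucc)
      simp only [hv'] at h
      rw [hprod, hvL]
      simp only [Bool.false_eq_true, if_false, mul_one]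
      exact h.symm
    by_cases hvL : v L = true
    · have hupd : ∀ i : Fin (m + 1),
          Function.update v L false i.castSucc = v i.castSucc :=
        fun i => Function.update_of_ne (Fin.castSucc_lt_last i).ne _ _
      rw [hkey v hvL hv, ← hfalse _ (Function.update_self L false v)]
      show g₀ * (List.ofFn fun i => if v i then Fin.snoc g b i else 1).prod = _
      rw [hprod, hprod, hvL, Function.update_self]
      simp only [hupd, Bool.false_eq_true, if_false, if_true, mul_one, mul_assoc]
    · exact hfalse v (Bool.not_eq_true _ |>.mp hvL)
end

section
/- Let A be an abelian group, k ≥ 1 and n natural numbers. For a function f : {0,1}^n → A and a subset S ⊆ [n], define w_S(f) := ∑_{v ∈ {0,1}^n, supp(v) ⊆ S} (−1)^{h(v)} f(v). Then every function f₀ : {v ∈ {0,1}^n : h(v) ≤ k} → A extends to a unique function f : {0,1}^n → A satisfying w_S(f) = 0 for every subset S ⊆ [n] with |S| ≥ k + 1. -/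
/-- The height `h(v) = ∑ᵢ vᵢ` of `v ∈ {0,1}^n`. -/
def cubeHeight {n : ℕ} (v : Fin n → Bool) : ℕ :=
  (Finset.univ.filter fun i => v i = true).card

/-- For `f : {0,1}^n → A` and `S ⊆ [n]`,
`w_S(f) = ∑_{supp(v) ⊆ S} (-1)^{h(v)} f(v)`. -/
def wSum {A : Type*} [AddCommGroup A] {n : ℕ} (S : Finset (Fin n))
    (f : (Fin n → Bool) → A) : A :=
  ∑ v ∈ Finset.univ.filter fun v : Fin n → Bool => ∀ i, v i = true → i ∈ S,
    ((-1 : ℤ) ^ cubeHeight v) • f v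

/-!
Identify `{0,1}^n` with the subsets of `[n]`, so that `f` becomes `F : 𝒫[n] → A` and `w_S(f)` is
the Möbius transform `(μF)(S) = ∑_{T ⊆ S} (-1)^{|T|} F(T)` of the Boolean lattice. Splitting off
one element at a time shows that `μ` is an involution. Since `(μF)(S)` only involves `F` below `S`,
the conditions force `μF` to be the truncation of `μF₀` to sets of size `≤ k`, so `F` is `μ` of
that truncation.
-/

open Finset

namespace Finset

variable {α A : Type*} [AddCommGroup A]

def moebiusTransform (F : Finset α → A) (S : Finset α) : A :=
  ∑ T ∈ S.powerset, (-1 : ℤ) ^ #T • F T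

lemma moebiusTransform_congr {F G : Finset α → A} {S : Finset α}
    (h : ∀ T ⊆ S, F T = G T) : moebiusTransform F S = moebiusTransform G S :=
  sum_congr rfl fun T hT => by rw [h T (mem_powerset.1 hT)]

lemma moebiusTransform_sub (F G : Finset α → A) (S : Finset α) :
    moebiusTransform (F - G) S = moebiusTransform F S - moebiusTransform G S := by
  simp only [moebiusTransform, Pi.sub_apply, smul_sub, sum_sub_distrib]

variable [DecidableEq α]

lemma moebiusTransform_insert (F : Finset α → A) {a : α} {S : Finset α} (ha : a ∉ S) :
    moebiusTransform F (insert a S) =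
      moebiusTransform F S - moebiusTransform (fun T => F (insert a T)) S := by
  simp only [moebiusTransform, sum_powerset_insert ha, sub_eq_add_neg, ← sum_neg_distrib]
  congr 1
  refine sum_congr rfl fun T hT => ?_
  have haT : a ∉ T := fun h => ha (mem_powerset.1 hT h)
  rw [card_insert_of_notMem haT, pow_succ, mul_neg_one, neg_smul]

theorem moebiusTransform_moebiusTransform (F : Finset α → A) (S : Finset α) :
    moebiusTransform (moebiusTransform F) S = F S := by
  induction S using Finset.induction_on generalizing F with
  | empty => simp [moebiusTransform]
  | insert a S ha ih =>
    have hshift : ∀ T ⊆ S, moebiusTransform F (insert a T) =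
        (moebiusTransform F - moebiusTransform fun T => F (insert a T)) T :=
      fun T hT => moebiusTransform_insert F fun h => ha (hT h)
    rw [moebiusTransform_insert _ ha, moebiusTransform_congr hshift, moebiusTransform_sub,
      sub_sub_cancel, ih]

theorem moebiusTransform_truncation_iff (k : ℕ) (F₀ F : Finset α → A) :
    ((∀ T, #T ≤ k → F T = F₀ T) ∧ ∀ S, k < #S → moebiusTransform F S = 0) ↔
      F = moebiusTransform fun S => if #S ≤ k then moebiusTransform F₀ S else 0 := by
  set G : Finset α → A := fun S => if #S ≤ k then moebiusTransform F₀ S else 0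
  have agree_below {F₁ F₂ : Finset α → A} {T : Finset α} (hT : #T ≤ k)
      (h : ∀ T', #T' ≤ k → F₁ T' = F₂ T') : moebiusTransform F₁ T = moebiusTransform F₂ T :=
    moebiusTransform_congr fun T' hT' => h T' ((card_le_card hT').trans hT)
  constructor
  · rintro ⟨hlow, hhigh⟩
    have hF : moebiusTransform F = G := by
      funext S
      by_cases hS : #S ≤ k
      · simp only [G, if_pos hS, agree_below hS hlow]
      · simp only [G, if_neg hS, hhigh S (not_le.1 hS)]
    rw [← hF]
    exact funext fun S => (moebiusTransform_moebiusTransform F S).symm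
  · rintro rfl
    refine ⟨fun T hT => ?_, fun S hS => ?_⟩
    · have hG : ∀ T', #T' ≤ k → G T' = moebiusTransform F₀ T' := fun T' hT' => if_pos hT'
      rw [agree_below hT hG, moebiusTransform_moebiusTransform]
    · rw [moebiusTransform_moebiusTransform]
      exact if_neg (not_le.2 hS)

end Finset

def boolFunEquivFinset (α : Type*) [Fintype α] [DecidableEq α] : (α → Bool) ≃ Finset α where
  toFun v := univ.filter fun i => v i = true
  invFun S i := decide (i ∈ S)
  left_inv v := by ext i; simp
  right_inv S := by ext i; simp

lemma cubeHeight_eq_card {n : ℕ} (v : Fin n → Bool) :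
    cubeHeight v = #(boolFunEquivFinset (Fin n) v) :=
  rfl

lemma wSum_eq_moebiusTransform {A : Type*} [AddCommGroup A] {n : ℕ} (S : Finset (Fin n))
    (f : (Fin n → Bool) → A) :
    wSum S f = moebiusTransform (f ∘ (boolFunEquivFinset (Fin n)).symm) S := by
  refine sum_equiv (boolFunEquivFinset (Fin n)) (fun v => ?_) fun v _ => ?_
  · simp [boolFunEquivFinset, subset_iff]
  · rw [cubeHeight_eq_card, Function.comp_apply, Equiv.symm_apply_apply]

theorem unique_extension_higher_degree_general {A : Type*} [AddCommGroup A]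
    (k n : ℕ) (f₀ : (Fin n → Bool) → A) :
    ∃! f : (Fin n → Bool) → A,
      (∀ v, cubeHeight v ≤ k → f v = f₀ v) ∧
      ∀ S : Finset (Fin n), k + 1 ≤ S.card → wSum S f = 0 := by
  set e := boolFunEquivFinset (Fin n)
  set G := moebiusTransform fun S => if #S ≤ k then moebiusTransform (f₀ ∘ e.symm) S else 0
  have hchar : ∀ f : (Fin n → Bool) → A,
      ((∀ v, cubeHeight v ≤ k → f v = f₀ v) ∧
        ∀ S : Finset (Fin n), k + 1 ≤ S.card → wSum S f = 0) ↔ f = G ∘ e := by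
    intro f
    rw [← Equiv.comp_symm_eq, ← moebiusTransform_truncation_iff]
    refine and_congr ?_ (forall_congr' fun S => ?_)
    · rw [e.symm.forall_congr_left]
      simp only [cubeHeight_eq_card, e, Equiv.symm_symm, Function.comp_apply,
        Equiv.symm_apply_apply]
    · rw [wSum_eq_moebiusTransform, Nat.succ_le_iff]
  exact ⟨G ∘ e, (hchar _).2 rfl, fun f hf => (hchar f).1 hf⟩

theorem unique_extension_higher_degree {A : Type*} [AddCommGroup A]
    (k n : ℕ) (hk : 1 ≤ k) (f₀ : (Fin n → Bool) → A) :
    ∃! f : (Fin n → Bool) → A,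
      (∀ v, cubeHeight v ≤ k → f v = f₀ v) ∧
      ∀ S : Finset (Fin n), k + 1 ≤ S.card → wSum S f = 0 :=
  unique_extension_higher_degree_general k n f₀
end
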